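/- arXiv:2407.08080 — 5 statements merged into one kernel-verified Lean document; each statement's English description precedes it below -/
import Mathlib

section
/- Let W be a finite Weyl group acting on ℝⁿ and let w ∈ W with reflection length ℓ_R(w) = k, written w = s_{β₁}⋯s_{β_k} as a minimal-length product of reflections. Then the move-set Mov(w) = Im(w − Id) has ℝ-basis {β₁^∨,…,β_k^∨}, and in particular dim_ℝ Mov(w) = ℓ_R(w). -/
open scoped RealInnerProductSpace

abbrev V (n : ℕ) : Type := EuclideanSpace ℝ (Fin n)

/-- `g` is the (orthogonal) reflection corresponding to the root `β`. -/
def IsReflAlong {n : ℕ} (β : V n) (g : V n ≃ₗ[ℝ] V n) : Prop :=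
  ∀ v, g v = v - (2 * ⟪v, β⟫ / ⟪β, β⟫) • β

/-- `Φ` is a finite crystallographic root system spanning `ℝⁿ`. -/
structure IsCrystalRootSystem {n : ℕ} (Φ : Set (V n)) : Prop where
  finite : Φ.Finite
  ne_zero : ∀ β ∈ Φ, β ≠ 0
  spans : Submodule.span ℝ Φ = ⊤
  refl_mem : ∀ α ∈ Φ, ∀ β ∈ Φ, β - (2 * ⟪β, α⟫ / ⟪α, α⟫) • α ∈ Φ
  crystal : ∀ α ∈ Φ, ∀ β ∈ Φ, ∃ z : ℤ, (2 * ⟪β, α⟫ / ⟪α, α⟫) = (z : ℝ)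

/-- The reflection length of `w`: the least `k` such that `w` is a product of `k`
reflections of the root system `Φ`. -/
noncomputable def reflLen {n : ℕ} (Φ : Set (V n)) (w : V n ≃ₗ[ℝ] V n) : ℕ :=
  sInf {k | ∃ l : List (V n ≃ₗ[ℝ] V n), l.length = k ∧
    (∀ g ∈ l, ∃ β ∈ Φ, IsReflAlong β g) ∧ l.prod = w}

/-- The Weyl group of `Φ`: the group generated by the reflections of `Φ`. -/
noncomputable def weylGroup {n : ℕ} (Φ : Set (V n)) : Subgroup (V n ≃ₗ[ℝ] V n) :=
  Subgroup.closure {g | ∃ β ∈ Φ, IsReflAlong β g}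

/-- The coroot `β^∨ = 2β/(β,β)` of a root `β`. -/
noncomputable def coroot {n : ℕ} (β : V n) : V n := (2 / ⟪β, β⟫) • β

/-- The coroot lattice: the `ℤ`-span of the coroots. -/
noncomputable def corootLattice {n : ℕ} (Φ : Set (V n)) : Submodule ℤ (V n) :=
  Submodule.span ℤ (coroot '' Φ)

/-- The move-set `Mov(w) = Im(w - Id)`. -/
noncomputable def movSet {n : ℕ} (w : V n ≃ₗ[ℝ] V n) : Submodule ℝ (V n) :=
  LinearMap.range (w.toLinearMap - LinearMap.id)

/-- The mod-set `Mod(w) = (w - Id)R^∨`. -/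
noncomputable def modSet {n : ℕ} (Φ : Set (V n)) (w : V n ≃ₗ[ℝ] V n) : Submodule ℤ (V n) :=
  Submodule.map ((w.toLinearMap - LinearMap.id).restrictScalars ℤ) (corootLattice Φ)

/-!
`Mov(w)` lies in the span of `β₁, …, β_k`, so `dim Mov(w) ≤ k`. Conversely (Carter), every
`w ∈ W` is a product of `dim Mov(w)` reflections: if `w ≠ 1`, some root `α` lies in
`Mov(w) = Fix(w)ᗮ`, and `s_α w` has a strictly larger fixed space. Such a root exists because
otherwise `Fix(w)` contains a vector `v` orthogonal to no root, and an element of `W` fixing a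
regular vector is trivial: `W` is generated by the reflections in the simple roots of the positive
system `{β | 0 < ⟪β, v⟫}`, and the exchange condition shortens any word in them that fixes `v`.
Hence `dim Mov(w) = k = ℓ_R(w)`, so `Mov(w)` is the span of the `β_i`, which is also the span of
the `k` coroots; these therefore form a basis.
-/

variable {n : ℕ}

noncomputable def reflAlong (α : V n) : V n ≃ₗ[ℝ] V n :=
  (ℝ ∙ α)ᗮ.reflection.toLinearEquiv

lemma reflAlong_apply (α v : V n) : reflAlong α v = v - (2 * ⟪v, α⟫ / ⟪α, α⟫) • α := by
  change (ℝ ∙ α)ᗮ.reflection v = _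
  rw [Submodule.reflection_orthogonal_apply, Submodule.reflection_singleton_apply,
    real_inner_self_eq_norm_sq, real_inner_comm]
  module

lemma isReflAlong_reflAlong (α : V n) : IsReflAlong α (reflAlong α) := reflAlong_apply α

lemma IsReflAlong.eq_reflAlong {α : V n} {g : V n ≃ₗ[ℝ] V n} (h : IsReflAlong α g) :
    g = reflAlong α :=
  LinearEquiv.ext fun v => (h v).trans (reflAlong_apply α v).symm

lemma reflAlong_mul_self (α : V n) : reflAlong α * reflAlong α = 1 :=
  LinearEquiv.ext (ℝ ∙ α)ᗮ.reflection_reflection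

lemma reflAlong_inv (α : V n) : (reflAlong α)⁻¹ = reflAlong α :=
  inv_eq_of_mul_eq_one_right (reflAlong_mul_self α)

lemma reflAlong_self (α : V n) : reflAlong α α = -α :=
  Submodule.reflection_orthogonalComplement_singleton_eq_neg α

lemma inner_reflAlong_reflAlong (α x y : V n) : ⟪reflAlong α x, reflAlong α y⟫ = ⟪x, y⟫ :=
  (ℝ ∙ α)ᗮ.reflection.inner_map_map x y

lemma reflAlong_smul {c : ℝ} (hc : c ≠ 0) (α : V n) : reflAlong (c • α) = reflAlong α := by
  simp only [reflAlong, Submodule.span_singleton_smul_eq hc.isUnit]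

lemma reflAlong_neg (α : V n) : reflAlong (-α) = reflAlong α := by
  rw [← neg_one_smul ℝ α, reflAlong_smul (by norm_num)]

lemma reflAlong_conj {u : V n ≃ₗ[ℝ] V n} (hu : ∀ x y, ⟪u x, u y⟫ = ⟪x, y⟫) (α : V n) :
    reflAlong (u α) = u * reflAlong α * u⁻¹ := by
  refine LinearEquiv.ext fun y => ?_
  obtain ⟨x, rfl⟩ := u.surjective y
  change reflAlong (u α) (u x) = u (reflAlong α (u.symm (u x)))
  rw [u.symm_apply_apply, reflAlong_apply, reflAlong_apply, hu, hu, map_sub, map_smul]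

lemma inner_map_map_of_mem_weylGroup {Φ : Set (V n)} {w : V n ≃ₗ[ℝ] V n}
    (hw : w ∈ weylGroup Φ) (x y : V n) : ⟪w x, w y⟫ = ⟪x, y⟫ := by
  induction hw using Subgroup.closure_induction'' generalizing x y with
  | mem g hg | inv_mem g hg =>
    obtain ⟨β, -, hgβ⟩ := hg
    simp only [hgβ.eq_reflAlong, reflAlong_inv, inner_reflAlong_reflAlong]
  | one => rfl
  | mul a b _ _ ha hb => exact (ha _ _).trans (hb x y)

lemma apply_mem_of_mem_weylGroup {Φ : Set (V n)} (hΦ : IsCrystalRootSystem Φ)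
    {w : V n ≃ₗ[ℝ] V n} (hw : w ∈ weylGroup Φ) {β : V n} (hβ : β ∈ Φ) : w β ∈ Φ := by
  induction hw using Subgroup.closure_induction'' generalizing β with
  | mem g hg | inv_mem g hg =>
    obtain ⟨α, hα, hgα⟩ := hg
    simp only [hgα.eq_reflAlong, reflAlong_inv]
    rw [reflAlong_apply]
    exact hΦ.refl_mem α hα β hβ
  | one => exact hβ
  | mul a b _ _ ha hb => exact ha (hb hβ)

noncomputable def fixSpace (w : V n ≃ₗ[ℝ] V n) : Submodule ℝ (V n) :=
  LinearMap.ker (w.toLinearMap - LinearMap.id)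

lemma mem_fixSpace {w : V n ≃ₗ[ℝ] V n} {v : V n} : v ∈ fixSpace w ↔ w v = v := by
  simp [fixSpace, sub_eq_zero]

lemma mem_movSet {w : V n ≃ₗ[ℝ] V n} {x : V n} : x ∈ movSet w ↔ ∃ v, w v - v = x := by
  simp [movSet]

lemma finrank_movSet_add_finrank_fixSpace (w : V n ≃ₗ[ℝ] V n) :
    Module.finrank ℝ (movSet w) + Module.finrank ℝ (fixSpace w) = n :=
  (LinearMap.finrank_range_add_finrank_ker _).trans finrank_euclideanSpace_fin

lemma movSet_one : movSet (1 : V n ≃ₗ[ℝ] V n) = ⊥ := by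
  simp [movSet]

lemma movSet_mul_le (a b : V n ≃ₗ[ℝ] V n) : movSet (a * b) ≤ movSet a ⊔ movSet b := by
  rintro - ⟨v, rfl⟩
  have hsplit : (a * b) v - v = (a (b v) - b v) + (b v - v) := by
    rw [LinearEquiv.mul_apply]; abel
  simp only [LinearMap.sub_apply, LinearEquiv.coe_coe, LinearMap.id_apply, hsplit]
  exact Submodule.add_mem_sup (mem_movSet.mpr ⟨b v, rfl⟩) (mem_movSet.mpr ⟨v, rfl⟩)

lemma movSet_reflAlong_le (α : V n) : movSet (reflAlong α) ≤ ℝ ∙ α := by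
  rintro - ⟨v, rfl⟩
  rw [Submodule.mem_span_singleton]
  exact ⟨-(2 * ⟪v, α⟫ / ⟪α, α⟫), by simp [reflAlong_apply]⟩

lemma movSet_list_prod_le {S : Set (V n)} (l : List (V n ≃ₗ[ℝ] V n))
    (hl : ∀ g ∈ l, ∃ β ∈ S, IsReflAlong β g) : movSet l.prod ≤ Submodule.span ℝ S := by
  induction l with
  | nil => simp [movSet_one]
  | cons g l ih =>
    obtain ⟨β, hβ, hgβ⟩ := hl g List.mem_cons_self
    rw [List.prod_cons, hgβ.eq_reflAlong]
    refine (movSet_mul_le _ _).trans (sup_le ?_ (ih fun h hh => hl h (List.mem_cons_of_mem _ hh)))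
    exact (movSet_reflAlong_le β).trans (Submodule.span_mono (Set.singleton_subset_iff.mpr hβ))

section InnerPreserving

variable {w : V n ≃ₗ[ℝ] V n} (hw : ∀ x y, ⟪w x, w y⟫ = ⟪x, y⟫)
include hw

lemma inner_movSet_fixSpace {u v : V n} (hu : u ∈ fixSpace w) : ⟪u, w v - v⟫ = 0 := by
  rw [inner_sub_right, ← hw u v, mem_fixSpace.mp hu, sub_self]

lemma movSet_eq_orthogonal_fixSpace : movSet w = (fixSpace w)ᗮ := by
  refine Submodule.eq_of_le_of_finrank_le ?_ ?_
  · rintro - ⟨v, rfl⟩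
    exact (Submodule.mem_orthogonal _ _).mpr fun u hu => inner_movSet_fixSpace hw hu
  · have := Submodule.finrank_add_finrank_orthogonal (fixSpace w)
    have := finrank_movSet_add_finrank_fixSpace w
    rw [finrank_euclideanSpace_fin] at *
    omega

/-- `s_α` fixes `Fix(w) ⊥ α` pointwise, and sends `w v = v + α` back to `v ∉ Fix(w)`. -/
lemma fixSpace_lt_fixSpace_reflAlong_mul {α : V n} (hα : α ≠ 0) (hmem : α ∈ movSet w) :
    fixSpace w < fixSpace (reflAlong α * w) := by
  obtain ⟨v, hv⟩ := mem_movSet.mp hmem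
  have hwv : w v = v + α := by rw [← hv]; abel
  have hvα : 2 * ⟪v, α⟫ + ⟪α, α⟫ = 0 := by
    have := hw v v
    rw [hwv, inner_add_add_self, real_inner_comm v α] at this
    linarith
  refine SetLike.lt_iff_le_and_exists.mpr ⟨fun u hu => ?_, v, ?_, ?_⟩
  · have hu' := mem_fixSpace.mp hu
    have huα : ⟪u, α⟫ = 0 := hv ▸ inner_movSet_fixSpace hw hu
    rw [mem_fixSpace, LinearEquiv.mul_apply, hu', reflAlong_apply, huα]
    simp
  · have hcoef : 2 * ⟪v + α, α⟫ / ⟪α, α⟫ = 1 := by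
      rw [div_eq_one_iff_eq (real_inner_self_pos.mpr hα).ne', inner_add_left]
      linarith
    rw [mem_fixSpace, LinearEquiv.mul_apply, hwv, reflAlong_apply, hcoef, one_smul,
      add_sub_cancel_right]
  · rw [mem_fixSpace, hwv]
    simpa using hα

lemma finrank_movSet_reflAlong_mul_lt {α : V n} (hα : α ≠ 0) (hmem : α ∈ movSet w) :
    Module.finrank ℝ (movSet (reflAlong α * w)) < Module.finrank ℝ (movSet w) := by
  have := Submodule.finrank_lt_finrank_of_lt (fixSpace_lt_fixSpace_reflAlong_mul hw hα hmem)
  have := finrank_movSet_add_finrank_fixSpace w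
  have := finrank_movSet_add_finrank_fixSpace (reflAlong α * w)
  omega

end InnerPreserving

/-- Splitting a vanishing combination into its positive and nonpositive parts `u - u' = 0` gives
`‖u‖² = ⟪u, u'⟫ ≤ 0`; pairing `u = 0` with `v` then forces the positive part to vanish. -/
lemma coeff_nonpos_of_linearCombination_eq_zero {E : Type*} [NormedAddCommGroup E]
    [InnerProductSpace ℝ E] {s : Set E} {v : E} (hv : ∀ x ∈ s, 0 < ⟪x, v⟫)
    (hs : s.Pairwise fun x y => ⟪x, y⟫ ≤ 0) {l : E →₀ ℝ} (hl : l ∈ Finsupp.supported ℝ ℝ s)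
    (hl0 : Finsupp.linearCombination ℝ id l = 0) (x : E) : l x ≤ 0 := by
  set P := l.support.filter (0 < l ·)
  set Q := l.support.filter (¬ 0 < l ·)
  have hsupp : ∀ x ∈ l.support, x ∈ s := fun x hx => hl hx
  have hsplit : ∑ x ∈ P, l x • x = -∑ y ∈ Q, l y • y := by
    rw [eq_neg_iff_add_eq_zero, Finset.sum_filter_add_sum_filter_not, ← hl0,
      Finsupp.linearCombination_apply, Finsupp.sum]
    rfl
  have hu : ∑ x ∈ P, l x • x = 0 := by
    refine real_inner_self_nonpos.mp ?_
    nth_rw 2 [hsplit]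
    rw [inner_neg_right, sum_inner, neg_nonpos]
    refine Finset.sum_nonneg fun x hx => ?_
    rw [inner_sum]
    refine Finset.sum_nonneg fun y hy => ?_
    rw [real_inner_smul_left, real_inner_smul_right]
    rw [Finset.mem_filter] at hx hy
    have hxy : x ≠ y := fun h => hy.2 (h ▸ hx.2)
    exact mul_nonneg hx.2.le
      (mul_nonneg_of_nonpos_of_nonpos (not_lt.mp hy.2) (hs (hsupp x hx.1) (hsupp y hy.1) hxy))
  have hP : P = ∅ := by
    by_contra hne
    have hpos : 0 < ⟪∑ x ∈ P, l x • x, v⟫ := by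
      rw [sum_inner]
      refine Finset.sum_pos (fun x hx => ?_) (Finset.nonempty_iff_ne_empty.mpr hne)
      rw [Finset.mem_filter] at hx
      rw [real_inner_smul_left]
      exact mul_pos hx.2 (hv x (hsupp x hx.1))
    rw [hu, inner_zero_left] at hpos
    exact lt_irrefl 0 hpos
  by_contra! hx
  exact Finset.notMem_empty x (hP ▸ Finset.mem_filter.mpr ⟨Finsupp.mem_support_iff.mpr hx.ne', hx⟩)

lemma linearIndepOn_of_pairwise_inner_nonpos {E : Type*} [NormedAddCommGroup E]
    [InnerProductSpace ℝ E] {s : Set E} {v : E} (hv : ∀ x ∈ s, 0 < ⟪x, v⟫)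
    (hs : s.Pairwise fun x y => ⟪x, y⟫ ≤ 0) : LinearIndepOn ℝ id s := by
  refine linearIndepOn_iff.mpr fun l hl hl0 => Finsupp.ext fun x => le_antisymm
    (coeff_nonpos_of_linearCombination_eq_zero hv hs hl hl0 x) ?_
  have hneg : Finsupp.linearCombination ℝ id (-l) = 0 := by rw [map_neg, hl0, neg_zero]
  simpa using coeff_nonpos_of_linearCombination_eq_zero hv hs (neg_mem hl) hneg x

section RootSystem

variable {Φ : Set (V n)}

lemma IsCrystalRootSystem.reflAlong_mem (hΦ : IsCrystalRootSystem Φ) {α β : V n} (hα : α ∈ Φ)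
    (hβ : β ∈ Φ) : reflAlong α β ∈ Φ := by
  rw [reflAlong_apply]
  exact hΦ.refl_mem α hα β hβ

lemma IsCrystalRootSystem.neg_mem (hΦ : IsCrystalRootSystem Φ) {β : V n} (hβ : β ∈ Φ) :
    -β ∈ Φ :=
  reflAlong_self β ▸ hΦ.reflAlong_mem hβ hβ

/-- The integers `2⟪β, α⟫/⟪α, α⟫` and `2⟪α, β⟫/⟪β, β⟫` are positive with product at most `4`
(Cauchy–Schwarz); if neither is `1`, both are `2`, which forces `α = β`. -/
lemma IsCrystalRootSystem.sub_mem_or_sub_mem (hΦ : IsCrystalRootSystem Φ) {α β : V n}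
    (hα : α ∈ Φ) (hβ : β ∈ Φ) (hne : β ≠ α) (hpos : 0 < ⟪β, α⟫) : β - α ∈ Φ ∨ α - β ∈ Φ := by
  have ha := real_inner_self_pos.mpr (hΦ.ne_zero α hα)
  have hb := real_inner_self_pos.mpr (hΦ.ne_zero β hβ)
  obtain ⟨z, hz⟩ := hΦ.crystal α hα β hβ
  obtain ⟨z', hz'⟩ := hΦ.crystal β hβ α hα
  rw [real_inner_comm] at hz'
  by_cases h1 : z = 1
  · left
    have h := hΦ.refl_mem α hα β hβ
    rwa [hz, h1, Int.cast_one, one_smul] at h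
  by_cases h1' : z' = 1
  · right
    have h := hΦ.refl_mem β hβ α hα
    rwa [real_inner_comm, hz', h1', Int.cast_one, one_smul] at h
  have two_le : ∀ {m : ℤ} {c : ℝ}, 0 < c → 2 * ⟪β, α⟫ / c = m → m ≠ 1 → c ≤ ⟪β, α⟫ := by
    intro m c hc hm hm1
    have hm0 : (0 : ℤ) < m := by exact_mod_cast hm ▸ (by positivity : 0 < 2 * ⟪β, α⟫ / c)
    have hm2 : (2 : ℝ) ≤ m := by exact_mod_cast (by omega : 2 ≤ m)
    rw [← hm, le_div_iff₀ hc] at hm2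
    linarith
  have hpa := two_le ha hz h1
  have hpb := two_le hb hz' h1'
  have hcs := real_inner_mul_inner_self_le β α
  have hzero : ⟪β - α, β - α⟫ = 0 := by
    rw [inner_sub_sub_self, real_inner_comm β α]
    nlinarith [mul_nonneg ha.le (sub_nonneg.2 hpb), mul_nonneg hb.le (sub_nonneg.2 hpa)]
  exact absurd (sub_eq_zero.mp (inner_self_eq_zero.mp hzero)) hne

def posRoots (Φ : Set (V n)) (v : V n) : Set (V n) := {β ∈ Φ | 0 < ⟪β, v⟫}

def simpleRoots (Φ : Set (V n)) (v : V n) : Set (V n) :=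
  {α ∈ posRoots Φ v | ∀ β ∈ posRoots Φ v, ∀ γ ∈ posRoots Φ v, β + γ ≠ α}

variable {v : V n}

lemma mem_posRoots_or_neg_mem_posRoots (hΦ : IsCrystalRootSystem Φ)
    (hv : ∀ β ∈ Φ, ⟪β, v⟫ ≠ 0) {β : V n} (hβ : β ∈ Φ) :
    β ∈ posRoots Φ v ∨ -β ∈ posRoots Φ v := by
  rcases (hv β hβ).lt_or_gt with h | h
  · exact Or.inr ⟨hΦ.neg_mem hβ, by rw [inner_neg_left]; linarith⟩
  · exact Or.inl ⟨hβ, h⟩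

lemma inner_nonpos_of_mem_simpleRoots (hΦ : IsCrystalRootSystem Φ)
    (hv : ∀ β ∈ Φ, ⟪β, v⟫ ≠ 0) {α β : V n} (hα : α ∈ simpleRoots Φ v)
    (hβ : β ∈ simpleRoots Φ v) (hne : α ≠ β) : ⟪α, β⟫ ≤ 0 := by
  have not_sub_mem : ∀ {x y : V n}, x ∈ simpleRoots Φ v → y ∈ simpleRoots Φ v → x - y ∉ Φ := by
    intro x y hx hy hxy
    rcases mem_posRoots_or_neg_mem_posRoots hΦ hv hxy with h | h
    · exact hx.2 y hy.1 (x - y) h (add_sub_cancel y x)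
    · exact hy.2 x hx.1 (-(x - y)) h (by abel)
  by_contra! hpos
  rcases hΦ.sub_mem_or_sub_mem hβ.1.1 hα.1.1 hne hpos with h | h
  · exact not_sub_mem hα hβ h
  · exact not_sub_mem hβ hα h

lemma linearIndepOn_simpleRoots (hΦ : IsCrystalRootSystem Φ) (hv : ∀ β ∈ Φ, ⟪β, v⟫ ≠ 0) :
    LinearIndepOn ℝ id (simpleRoots Φ v) :=
  linearIndepOn_of_pairwise_inner_nonpos (fun _ hx => hx.1.2)
    fun _ hx _ hy hne => inner_nonpos_of_mem_simpleRoots hΦ hv hx hy hne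

@[elab_as_elim]
lemma posRoots_induction (hfin : Φ.Finite) {P : V n → Prop}
    (ih : ∀ β ∈ posRoots Φ v, (∀ γ ∈ posRoots Φ v, ⟪γ, v⟫ < ⟪β, v⟫ → P γ) → P β)
    {β : V n} (hβ : β ∈ posRoots Φ v) : P β :=
  (Set.wellFoundedOn_image.mp ((hfin.subset fun _ h => h.1).image (⟪·, v⟫)).isWF).induction hβ ih

lemma exists_nonneg_coeffs_of_mem_posRoots (hfin : Φ.Finite) {β : V n}
    (hβ : β ∈ posRoots Φ v) : ∃ c : V n →₀ ℝ, c ∈ Finsupp.supported ℝ ℝ (simpleRoots Φ v) ∧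
      (∀ x, 0 ≤ c x) ∧ Finsupp.linearCombination ℝ id c = β := by
  refine posRoots_induction hfin (fun β hβ ih => ?_) hβ
  by_cases hs : β ∈ simpleRoots Φ v
  · refine ⟨Finsupp.single β 1, Finsupp.single_mem_supported ℝ 1 hs, fun x => ?_, by simp⟩
    rw [Finsupp.single_apply]
    split_ifs <;> norm_num
  · obtain ⟨γ, hγ, δ, hδ, rfl⟩ : ∃ γ ∈ posRoots Φ v, ∃ δ ∈ posRoots Φ v, γ + δ = β := by
      simpa [simpleRoots, hβ] using hs
    have hsum : ⟪γ + δ, v⟫ = ⟪γ, v⟫ + ⟪δ, v⟫ := inner_add_left _ _ _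
    obtain ⟨c, hc, hc0, rfl⟩ := ih γ hγ (by linarith [hδ.2])
    obtain ⟨d, hd, hd0, rfl⟩ := ih δ hδ (by linarith [hγ.2])
    exact ⟨c + d, add_mem hc hd, fun x => add_nonneg (hc0 x) (hd0 x), map_add _ c d⟩

lemma exists_simpleRoot_inner_pos (hΦ : IsCrystalRootSystem Φ) {β : V n}
    (hβ : β ∈ posRoots Φ v) : ∃ δ ∈ simpleRoots Φ v, 0 < ⟪δ, β⟫ := by
  have hβ0 := hΦ.ne_zero β hβ.1
  obtain ⟨c, hc, hc0, hcβ⟩ := exists_nonneg_coeffs_of_mem_posRoots hΦ.finite hβ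
  by_contra! h
  refine hβ0 (real_inner_self_nonpos.mp ?_)
  nth_rw 1 [← hcβ]
  rw [Finsupp.linearCombination_apply, Finsupp.sum, sum_inner]
  refine Finset.sum_nonpos fun x hx => ?_
  rw [real_inner_smul_left]
  exact mul_nonpos_of_nonneg_of_nonpos (hc0 x) (h x (hc hx))

/-- Writing `β` and `-s_α β = q α - β` in simple roots with nonnegative coefficients, their sum
is `q α`; by independence of the simple roots `β` has no coefficient off `α`. -/
lemma reflAlong_mem_posRoots (hΦ : IsCrystalRootSystem Φ) (hv : ∀ β ∈ Φ, ⟪β, v⟫ ≠ 0)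
    {α β : V n} (hα : α ∈ simpleRoots Φ v) (hβ : β ∈ posRoots Φ v)
    (hne : ∀ c : ℝ, β ≠ c • α) : reflAlong α β ∈ posRoots Φ v := by
  refine (mem_posRoots_or_neg_mem_posRoots hΦ hv (hΦ.reflAlong_mem hα.1.1 hβ.1)).resolve_right
    fun hneg => ?_
  obtain ⟨b, hb, hb0, hbβ⟩ := exists_nonneg_coeffs_of_mem_posRoots hΦ.finite hβ
  obtain ⟨g, hg, hg0, hgγ⟩ := exists_nonneg_coeffs_of_mem_posRoots hΦ.finite hneg
  have hsum : b + g - Finsupp.single α (2 * ⟪β, α⟫ / ⟪α, α⟫) = 0 := by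
    refine linearIndepOn_iff.mp (linearIndepOn_simpleRoots hΦ hv) _
      (sub_mem (add_mem hb hg) (Finsupp.single_mem_supported ℝ _ hα)) ?_
    rw [map_sub, map_add, hbβ, hgγ, Finsupp.linearCombination_single, reflAlong_apply, id]
    module
  have hb_single : b = Finsupp.single α (b α) := by
    ext x
    by_cases hx : x = α
    · simp [hx]
    · have := DFunLike.congr_fun hsum x
      simp only [Finsupp.coe_sub, Finsupp.coe_add, Pi.sub_apply, Pi.add_apply,
        Finsupp.single_eq_of_ne hx, sub_zero, Finsupp.coe_zero, Pi.zero_apply] at this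
      rw [Finsupp.single_eq_of_ne hx]
      linarith [hb0 x, hg0 x]
  refine hne (b α) ?_
  rw [← hbβ, hb_single, Finsupp.linearCombination_single, Finsupp.single_eq_same, id]

def simpleRefls (Φ : Set (V n)) (v : V n) : Set (V n ≃ₗ[ℝ] V n) := reflAlong '' simpleRoots Φ v

lemma list_prod_mem_weylGroup {L : List (V n ≃ₗ[ℝ] V n)} (hL : ∀ g ∈ L, g ∈ simpleRefls Φ v) :
    L.prod ∈ weylGroup Φ := by
  refine (weylGroup Φ).list_prod_mem fun g hg => ?_
  obtain ⟨α, hα, rfl⟩ := hL g hg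
  exact Subgroup.subset_closure ⟨α, hα.1.1, isReflAlong_reflAlong α⟩

lemma reflAlong_mem_closure_simpleRefls (hΦ : IsCrystalRootSystem Φ)
    (hv : ∀ β ∈ Φ, ⟪β, v⟫ ≠ 0) {β : V n} (hβ : β ∈ Φ) :
    reflAlong β ∈ Submonoid.closure (simpleRefls Φ v) := by
  wlog hpos : β ∈ posRoots Φ v generalizing β
  · rw [← reflAlong_neg]
    exact this (hΦ.neg_mem hβ) ((mem_posRoots_or_neg_mem_posRoots hΦ hv hβ).resolve_left hpos)
  refine posRoots_induction hΦ.finite (fun β hβ ih => ?_) hpos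
  obtain ⟨δ, hδ, hδβ⟩ := exists_simpleRoot_inner_pos hΦ hβ
  have hδmem : reflAlong δ ∈ Submonoid.closure (simpleRefls Φ v) :=
    Submonoid.subset_closure ⟨δ, hδ, rfl⟩
  rcases em (∃ c : ℝ, β = c • δ) with ⟨c, rfl⟩ | hprop
  · have hc : c ≠ 0 := by
      rintro rfl
      exact hΦ.ne_zero _ hβ.1 (zero_smul ℝ δ)
    rwa [reflAlong_smul hc]
  rw [not_exists] at hprop
  have hlt : ⟪reflAlong δ β, v⟫ < ⟪β, v⟫ := by
    have hcoef : 0 < 2 * ⟪β, δ⟫ / ⟪δ, δ⟫ := by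
      have := real_inner_self_pos.mpr (hΦ.ne_zero δ hδ.1.1)
      rw [real_inner_comm] at hδβ
      positivity
    rw [reflAlong_apply, inner_sub_left, real_inner_smul_left]
    nlinarith [hδ.1.2]
  have hconj : reflAlong β = reflAlong δ * reflAlong (reflAlong δ β) * reflAlong δ := by
    rw [reflAlong_conj (inner_reflAlong_reflAlong δ), reflAlong_inv]
    simp only [← mul_assoc, reflAlong_mul_self, one_mul]
    rw [mul_assoc, reflAlong_mul_self, mul_one]
  rw [hconj]
  exact mul_mem (mul_mem hδmem (ih _ (reflAlong_mem_posRoots hΦ hv hδ hβ hprop) hlt)) hδmem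

/-- The exchange condition. The first letter `s_α` that makes the image of `β` negative must send
the positive root `T β` to a negative one, so `T β ∈ ℝα` and `s_α = T s_β T⁻¹`. -/
lemma exists_list_prod_eq_mul_reflAlong (hΦ : IsCrystalRootSystem Φ)
    (hv : ∀ β ∈ Φ, ⟪β, v⟫ ≠ 0) {L : List (V n ≃ₗ[ℝ] V n)} (hL : ∀ g ∈ L, g ∈ simpleRefls Φ v)
    {β : V n} (hβ : β ∈ posRoots Φ v) (hLβ : L.prod β ∉ posRoots Φ v) :
    ∃ L' : List (V n ≃ₗ[ℝ] V n), (∀ g ∈ L', g ∈ simpleRefls Φ v) ∧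
      L'.prod = L.prod * reflAlong β ∧ L'.length + 1 = L.length := by
  induction L with
  | nil => exact absurd hβ (by simpa using hLβ)
  | cons g T ih =>
    obtain ⟨α, hα, rfl⟩ := hL g List.mem_cons_self
    have hT : ∀ g ∈ T, g ∈ simpleRefls Φ v := fun g hg => hL g (List.mem_cons_of_mem _ hg)
    rw [List.prod_cons, LinearEquiv.mul_apply] at hLβ
    by_cases hTβ : T.prod β ∈ posRoots Φ v
    · obtain ⟨c, hc⟩ : ∃ c : ℝ, T.prod β = c • α := by
        by_contra! h
        exact hLβ (reflAlong_mem_posRoots hΦ hv hα hTβ h)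
      have hc0 : c ≠ 0 := by
        rintro rfl
        exact hΦ.ne_zero _ hTβ.1 (by rw [hc, zero_smul])
      refine ⟨T, hT, ?_, rfl⟩
      rw [List.prod_cons, ← reflAlong_smul hc0, ← hc,
        reflAlong_conj (inner_map_map_of_mem_weylGroup (list_prod_mem_weylGroup hT)),
        inv_mul_cancel_right, mul_assoc, reflAlong_mul_self, mul_one]
    · obtain ⟨T', hT', hprod, hlen⟩ := ih hT hTβ
      refine ⟨reflAlong α :: T', List.forall_mem_cons.mpr ⟨⟨α, hα, rfl⟩, hT'⟩, ?_, ?_⟩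
      · rw [List.prod_cons, List.prod_cons, hprod, mul_assoc]
      · simp [hlen]

lemma list_prod_eq_one_of_apply_eq (hΦ : IsCrystalRootSystem Φ)
    (hv : ∀ β ∈ Φ, ⟪β, v⟫ ≠ 0) {L : List (V n ≃ₗ[ℝ] V n)} (hL : ∀ g ∈ L, g ∈ simpleRefls Φ v)
    (hLv : L.prod v = v) : L.prod = 1 := by
  induction h : L.length using Nat.strong_induction_on generalizing L with
  | _ m ih =>
  rcases L.eq_nil_or_concat with rfl | ⟨F, g, rfl⟩
  · rfl
  obtain ⟨α, hα, rfl⟩ := hL g (by simp)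
  have hF : ∀ g ∈ F, g ∈ simpleRefls Φ v := fun g hg => hL g (by simp [hg])
  have hprod : (F.concat (reflAlong α)).prod = F.prod * reflAlong α := by simp
  /- `w = F s_α` fixes `v`, hence keeps `α` positive, so `F α = -(w α)` is negative and the
  exchange condition shortens `F` to a word for `F s_α = w`. -/
  have hwα : 0 < ⟪(F.prod * reflAlong α) α, v⟫ := by
    have h := inner_map_map_of_mem_weylGroup (list_prod_mem_weylGroup hL) α v
    rw [hLv, hprod] at h
    exact h ▸ hα.1.2
  have hFα : F.prod α ∉ posRoots Φ v := by
    rintro ⟨-, hpos⟩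
    rw [LinearEquiv.mul_apply, reflAlong_self, map_neg, inner_neg_left] at hwα
    linarith
  obtain ⟨F', hF', hF'prod, hF'len⟩ := exists_list_prod_eq_mul_reflAlong hΦ hv hF hα.1 hFα
  rw [hprod, ← hF'prod] at hLv ⊢
  exact ih F'.length (by simp at h; omega) hF' hLv rfl

lemma mem_closure_simpleRefls_of_mem_weylGroup (hΦ : IsCrystalRootSystem Φ)
    (hv : ∀ β ∈ Φ, ⟪β, v⟫ ≠ 0) {w : V n ≃ₗ[ℝ] V n} (hw : w ∈ weylGroup Φ) :
    w ∈ Submonoid.closure (simpleRefls Φ v) := by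
  induction hw using Subgroup.closure_induction'' with
  | mem g hg | inv_mem g hg =>
    obtain ⟨β, hβ, hgβ⟩ := hg
    simp only [hgβ.eq_reflAlong, reflAlong_inv]
    exact reflAlong_mem_closure_simpleRefls hΦ hv hβ
  | one => exact one_mem _
  | mul a b _ _ ha hb => exact mul_mem ha hb

theorem eq_one_of_mem_weylGroup_of_apply_eq (hΦ : IsCrystalRootSystem Φ)
    (hv : ∀ β ∈ Φ, ⟪β, v⟫ ≠ 0) {w : V n ≃ₗ[ℝ] V n} (hw : w ∈ weylGroup Φ) (hwv : w v = v) :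
    w = 1 := by
  obtain ⟨L, hL, rfl⟩ :=
    Submonoid.exists_list_of_mem_closure (mem_closure_simpleRefls_of_mem_weylGroup hΦ hv hw)
  exact list_prod_eq_one_of_apply_eq hΦ hv hL hwv

lemma exists_root_mem_movSet (hΦ : IsCrystalRootSystem Φ) {w : V n ≃ₗ[ℝ] V n}
    (hw : w ∈ weylGroup Φ) (hne : w ≠ 1) : ∃ α ∈ Φ, α ∈ movSet w := by
  by_contra! h
  simp only [movSet_eq_orthogonal_fixSpace (inner_map_map_of_mem_weylGroup hw),
    Submodule.mem_orthogonal', not_forall] at h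
  have : Finite Φ := hΦ.finite.to_subtype
  have hex : ∀ β : Φ, ∃ u : fixSpace w, ⟪(β : V n), (u : V n)⟫ ≠ 0 := fun β => by
    obtain ⟨u, hu, hβu⟩ := h β β.2
    exact ⟨⟨u, hu⟩, hβu⟩
  obtain ⟨u, hu⟩ := Module.Dual.exists_forall_ne_zero_of_forall_exists
    (fun β : Φ => (innerₛₗ ℝ (β : V n)).domRestrict (fixSpace w)) hex
  exact hne (eq_one_of_mem_weylGroup_of_apply_eq hΦ (fun β hβ => hu ⟨β, hβ⟩) hw
    (mem_fixSpace.mp u.2))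

theorem exists_reflections_length_le_finrank_movSet (hΦ : IsCrystalRootSystem Φ)
    {w : V n ≃ₗ[ℝ] V n} (hw : w ∈ weylGroup Φ) :
    ∃ l : List (V n ≃ₗ[ℝ] V n), l.length ≤ Module.finrank ℝ (movSet w) ∧
      (∀ g ∈ l, ∃ β ∈ Φ, IsReflAlong β g) ∧ l.prod = w := by
  induction h : Module.finrank ℝ (movSet w) using Nat.strong_induction_on generalizing w with
  | _ d ih =>
  by_cases h1 : w = 1
  · exact ⟨[], by simp, by simp, h1.symm⟩
  obtain ⟨α, hα, hαw⟩ := exists_root_mem_movSet hΦ hw h1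
  have hsα : ∃ β ∈ Φ, IsReflAlong β (reflAlong α) := ⟨α, hα, isReflAlong_reflAlong α⟩
  have hlt := finrank_movSet_reflAlong_mul_lt (inner_map_map_of_mem_weylGroup hw)
    (hΦ.ne_zero α hα) hαw
  obtain ⟨l, hlen, hl, hprod⟩ := ih _ (h ▸ hlt) (mul_mem (Subgroup.subset_closure hsα) hw) rfl
  refine ⟨reflAlong α :: l, by simp; omega, List.forall_mem_cons.mpr ⟨hsα, hl⟩, ?_⟩
  rw [List.prod_cons, hprod, ← mul_assoc, reflAlong_mul_self, one_mul]

lemma reflLen_le_finrank_movSet (hΦ : IsCrystalRootSystem Φ) {w : V n ≃ₗ[ℝ] V n}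
    (hw : w ∈ weylGroup Φ) : reflLen Φ w ≤ Module.finrank ℝ (movSet w) := by
  obtain ⟨l, hlen, hl, hprod⟩ := exists_reflections_length_le_finrank_movSet hΦ hw
  refine le_trans (Nat.sInf_le ?_) hlen
  exact ⟨l, rfl, hl, hprod⟩

end RootSystem

lemma span_range_coroot {ι : Type*} {β : ι → V n} (hβ : ∀ i, β i ≠ 0) :
    Submodule.span ℝ (Set.range fun i => coroot (β i)) = Submodule.span ℝ (Set.range β) := by
  simp only [Submodule.span_range_eq_iSup, coroot]
  refine iSup_congr fun i => Submodule.span_singleton_smul_eq (IsUnit.mk0 _ ?_) _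
  exact div_ne_zero two_ne_zero (inner_self_ne_zero.mpr (hβ i))

lemma exists_basis_coe_eq_of_span_eq {K E ι : Type*} [Field K] [AddCommGroup E] [Module K E]
    [Fintype ι] {p : Submodule K E} {b : ι → E} (hspan : Submodule.span K (Set.range b) = p)
    (hcard : Fintype.card ι = Module.finrank K p) :
    ∃ B : Module.Basis ι K p, ∀ i, (B i : E) = b i := by
  subst hspan
  exact ⟨.span (linearIndependent_iff_card_eq_finrank_span.mpr hcard), fun i => by
    rw [Module.Basis.span_apply]⟩

/-- If `w ∈ W` has reflection length `k` and `w = s_{β₁}⋯s_{β_k}` is a minimal-length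
product of reflections, then the move-set `Mov(w) = Im(w − Id)` has `ℝ`-basis the coroots
`{β₁^∨, …, β_k^∨}`; in particular `dim_ℝ Mov(w) = ℓ_R(w)`. -/
theorem movSet_basis_of_minimal_reflection_factorization {n k : ℕ} (Φ : Set (V n))
    (hΦ : IsCrystalRootSystem Φ) (β : Fin k → V n) (hβ : ∀ i, β i ∈ Φ)
    (g : Fin k → (V n ≃ₗ[ℝ] V n)) (hg : ∀ i, IsReflAlong (β i) (g i))
    (w : V n ≃ₗ[ℝ] V n) (hw : w = (List.ofFn g).prod)
    (hmin : reflLen Φ w = k) :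
    (∃ b : Module.Basis (Fin k) ℝ (movSet w), ∀ i, (b i : V n) = coroot (β i)) ∧
      Module.finrank ℝ (movSet w) = reflLen Φ w := by
  have hw_mem : w ∈ weylGroup Φ := hw ▸ (weylGroup Φ).list_prod_mem fun h hh => by
    obtain ⟨i, rfl⟩ := List.mem_ofFn.mp hh
    exact Subgroup.subset_closure ⟨β i, hβ i, hg i⟩
  have hle : movSet w ≤ Submodule.span ℝ (Set.range β) := hw ▸ movSet_list_prod_le _ fun h hh => by
    obtain ⟨i, rfl⟩ := List.mem_ofFn.mp hh
    exact ⟨β i, ⟨i, rfl⟩, hg i⟩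
  have hspan_le : Module.finrank ℝ (Submodule.span ℝ (Set.range β)) ≤ k := by
    simpa [Set.finrank] using finrank_range_le_card (R := ℝ) β
  have hk : Module.finrank ℝ (movSet w) = k :=
    le_antisymm ((Submodule.finrank_mono hle).trans hspan_le)
      (hmin ▸ reflLen_le_finrank_movSet hΦ hw_mem)
  have hmov : movSet w = Submodule.span ℝ (Set.range β) :=
    Submodule.eq_of_le_of_finrank_le hle (hk ▸ hspan_le)
  refine ⟨exists_basis_coe_eq_of_span_eq ?_ (by simp [hk]), hk.trans hmin.symm⟩
  rw [span_range_coroot fun i => hΦ.ne_zero _ (hβ i), hmov]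
end

section
/- Let W be the finite Weyl group of type Aₙ (symmetric group S_{n+1}) with simple reflections s₁,…,sₙ and simple coroots α₁^∨,…,αₙ^∨, and let w = s₁s₂⋯sₙ be the Coxeter element. Then (Id − w)R^∨ = { Σᵢ cᵢαᵢ^∨ : cᵢ ∈ ℤ, Σᵢ cᵢ ≡ 0 mod (n+1) }. -/
/-- The matrix of the simple reflection `sᵢ` acting on the coroot lattice `ℤⁿ` in the basis
of simple coroots: `sᵢ(αⱼ^∨) = αⱼ^∨ − C i j • αᵢ^∨`, where `C` is the Cartan matrix. -/
def reflMat {n : ℕ} (C : Matrix (Fin n) (Fin n) ℤ) (i : Fin n) : Matrix (Fin n) (Fin n) ℤ :=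
  1 - Matrix.of (fun k j => if k = i then C i j else 0)

/-- The Cartan matrix of type `Aₙ`. -/
def cartanA (n : ℕ) : Matrix (Fin n) (Fin n) ℤ :=
  Matrix.of fun i j => if i = j then 2 else
    if (i : ℕ) + 1 = j ∨ (j : ℕ) + 1 = i then -1 else 0

/-- The matrix of the Coxeter element `w = s₁s₂⋯sₙ` of type `Aₙ`. -/
def coxA (n : ℕ) : Matrix (Fin n) (Fin n) ℤ :=
  (List.ofFn fun i : Fin n => reflMat (cartanA n) i).prod

/-- Partial products of the simple reflections. -/
def Qmat (n k : ℕ) : Matrix (Fin n) (Fin n) ℤ :=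
  Matrix.of fun i j => if (i : ℕ) < k then
      ((if (i:ℕ) = (j:ℕ)+1 then 1 else 0) - (if (j:ℕ)+1 = k then 1 else 0)
        + (if (j:ℕ) = k then 1 else 0))
    else (if (i:ℕ) = (j:ℕ) then 1 else 0)

lemma Qmat_zero (n : ℕ) : Qmat n 0 = 1 := by
  ext i j
  simp [Qmat, Matrix.one_apply, Fin.ext_iff]

set_option maxHeartbeats 2000000 in
lemma Qmat_succ (n k : ℕ) (hk : k < n) :
    Qmat n (k+1) = Qmat n k * reflMat (cartanA n) ⟨k, hk⟩ := by
  ext i j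
  rw [Matrix.mul_apply]
  simp only [reflMat, Matrix.sub_apply, Matrix.one_apply, Matrix.of_apply, mul_sub,
    Finset.sum_sub_distrib, mul_ite, mul_one, mul_zero, ite_mul, zero_mul,
    Finset.sum_ite_eq', Finset.mem_univ, if_true]
  simp only [Qmat, cartanA, Matrix.of_apply, Fin.ext_iff]
  have hi := i.isLt
  have hj := j.isLt
  split_ifs <;> omega

lemma coxA_eq (n : ℕ) : coxA n = Qmat n n := by
  have key : ∀ k, k ≤ n →
      ((List.ofFn fun i : Fin n => reflMat (cartanA n) i).take k).prod = Qmat n k := by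
    intro k
    induction k with
    | zero => intro _; simp [Qmat_zero]
    | succ k ih =>
      intro hk
      have hk' : k < n := hk
      rw [List.prod_take_succ _ _
        (by simpa using hk' : k < (List.ofFn fun i : Fin n => reflMat (cartanA n) i).length)]
      rw [ih (le_of_lt hk'), Qmat_succ n k hk']
      congr 1
      simp
  have := key n le_rfl
  rwa [List.take_of_length_le (by simp)] at this

lemma sum_ite_fin {n : ℕ} (m : ℕ) (f : Fin n → ℤ) :
    (∑ j : Fin n, if (j : ℕ) = m then f j else 0)
      = if h : m < n then f ⟨m, h⟩ else 0 := by
  split_ifs with h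
  · have hc : ∀ j : Fin n, ((j:ℕ) = m) = (j = ⟨m, h⟩) := fun j => by
      simp [Fin.ext_iff]
    simp_rw [hc]
    simp
  · apply Finset.sum_eq_zero
    intro j _
    rw [if_neg]
    have := j.isLt
    omega

lemma oneSubCox (n : ℕ) (hn : 1 ≤ n) :
    (1 : Matrix (Fin n) (Fin n) ℤ) - coxA n
      = Matrix.of (fun k j : Fin n => (if k = j then 1 else 0)
          - (if (k:ℕ) = (j:ℕ)+1 then 1 else 0) + (if (j:ℕ) = n-1 then 1 else 0)) := by
  rw [coxA_eq]
  ext k j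
  have hk := k.isLt
  have hj := j.isLt
  simp only [Matrix.sub_apply, Matrix.one_apply, Qmat, Matrix.of_apply, Fin.ext_iff]
  split_ifs <;> omega

lemma mulVec_apply' (n : ℕ) (hn : 1 ≤ n) (x : Fin n → ℤ) (k : Fin n) :
    ((1 - coxA n).mulVec x) k
      = x k - (∑ j : Fin n, if (k:ℕ) = (j:ℕ)+1 then x j else 0) + x ⟨n-1, by omega⟩ := by
  rw [oneSubCox n hn]
  simp only [Matrix.mulVec, dotProduct, Matrix.of_apply, sub_mul, add_mul, ite_mul,
    one_mul, zero_mul, Finset.sum_add_distrib, Finset.sum_sub_distrib,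
    Finset.sum_ite_eq, Finset.mem_univ, if_true]
  congr 1
  rw [sum_ite_fin (n-1) x, dif_pos (by omega)]

lemma sum_eq (n : ℕ) (hn : 1 ≤ n) (x : Fin n → ℤ) :
    ∑ k, ((1 - coxA n).mulVec x) k = ((n:ℤ)+1) * x ⟨n-1, by omega⟩ := by
  simp only [mulVec_apply' n hn x]
  rw [Finset.sum_add_distrib, Finset.sum_sub_distrib, Finset.sum_const, Finset.card_univ,
    Fintype.card_fin, Finset.sum_comm]
  have h1 : ∀ j : Fin n, (∑ k : Fin n, if (k:ℕ) = (j:ℕ)+1 then x j else 0)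
      = if (j:ℕ)+1 < n then x j else 0 := by
    intro j
    rw [sum_ite_fin ((j:ℕ)+1) (fun _ => x j), dite_eq_ite]
  rw [Finset.sum_congr rfl (fun j _ => h1 j)]
  have h2 : (∑ j : Fin n, x j) - (∑ j : Fin n, if (j:ℕ)+1 < n then x j else 0)
      = x ⟨n-1, by omega⟩ := by
    rw [← Finset.sum_sub_distrib]
    have h3 : ∀ j : Fin n, x j - (if (j:ℕ)+1 < n then x j else 0)
        = if (j:ℕ) = n-1 then x j else 0 := by
      intro j
      have := j.isLt
      split_ifs <;> first | ring1 | omega | (exfalso; omega)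
    rw [Finset.sum_congr rfl (fun j _ => h3 j), sum_ite_fin (n-1) x, dif_pos (by omega)]
  rw [h2]
  push_cast
  ring

/-- In type `Aₙ`, for the Coxeter element `w = s₁s₂⋯sₙ`, the mod-set
`(Id − w)R^∨` consists exactly of those `Σ cᵢ αᵢ^∨` with `Σ cᵢ ≡ 0 mod (n+1)`. -/
theorem modSet_coxeter_typeA (n : ℕ) (hn : 1 ≤ n) (c : Fin n → ℤ) :
    (∃ x : Fin n → ℤ, ((1 : Matrix (Fin n) (Fin n) ℤ) - coxA n).mulVec x = c)
      ↔ ((n : ℤ) + 1) ∣ ∑ i, c i := by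
  constructor
  · rintro ⟨x, rfl⟩
    rw [sum_eq n hn x]
    exact dvd_mul_right _ _
  · rintro ⟨m, hm⟩
    set x : Fin n → ℤ :=
      fun k : Fin n => (∑ j : Fin n, if (j:ℕ) ≤ (k:ℕ) then c j else 0) - (((k:ℕ):ℤ)+1)*m with hx
    refine ⟨x, funext fun k => ?_⟩
    rw [mulVec_apply' n hn x k]
    have hlast : x ⟨n-1, by omega⟩ = m := by
      rw [hx]
      simp only
      have hall : ∀ j : Fin n, (if (j:ℕ) ≤ ((⟨n-1, by omega⟩ : Fin n):ℕ) then c j else 0) = c j := by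
        intro j
        have := j.isLt
        rw [if_pos (by simp; omega)]
      rw [Finset.sum_congr rfl (fun j _ => hall j), hm]
      have : (((⟨n-1, by omega⟩ : Fin n):ℕ) : ℤ) + 1 = (n:ℤ) := by
        simp
        omega
      rw [this]
      ring
    rw [hlast]
    by_cases hk0 : (k:ℕ) = 0
    · have hz : (∑ j : Fin n, if (k:ℕ) = (j:ℕ)+1 then x j else 0) = 0 := by
        apply Finset.sum_eq_zero
        intro j _
        rw [if_neg (by omega)]
      rw [hz]
      have hxk : x k = c k - m := by
        rw [hx]
        simp only
        have hcond : ∀ j : Fin n, ((j:ℕ) ≤ (k:ℕ)) = ((j:ℕ) = 0) := fun j => by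
          simp [hk0, Nat.le_zero]
        simp_rw [hcond]
        rw [sum_ite_fin 0 c, dif_pos (by omega)]
        have : (⟨0, by omega⟩ : Fin n) = k := by simp [Fin.ext_iff]; omega
        rw [this, hk0]
        push_cast
        ring
      rw [hxk]
      ring
    · have hkm : (k:ℕ) - 1 < n := by have := k.isLt; omega
      have hmid : (∑ j : Fin n, if (k:ℕ) = (j:ℕ)+1 then x j else 0) = x ⟨(k:ℕ)-1, hkm⟩ := by
        have hcond : ∀ j : Fin n, ((k:ℕ) = (j:ℕ)+1) = ((j:ℕ) = (k:ℕ)-1) := fun j => by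
          simp; omega
        simp_rw [hcond]
        rw [sum_ite_fin ((k:ℕ)-1) x, dif_pos hkm]
      rw [hmid, hx]
      simp only
      have hdiff : (∑ j : Fin n, if (j:ℕ) ≤ (k:ℕ) then c j else 0)
          - (∑ j : Fin n, if (j:ℕ) ≤ ((⟨(k:ℕ)-1, hkm⟩ : Fin n):ℕ) then c j else 0) = c k := by
        rw [← Finset.sum_sub_distrib]
        have h4 : ∀ j : Fin n,
            (if (j:ℕ) ≤ (k:ℕ) then c j else 0)
              - (if (j:ℕ) ≤ ((⟨(k:ℕ)-1, hkm⟩ : Fin n):ℕ) then c j else 0)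
            = if (j:ℕ) = (k:ℕ) then c j else 0 := by
          intro j
          simp only [Fin.val_mk]
          split_ifs <;> first | ring1 | omega | (exfalso; omega)
        rw [Finset.sum_congr rfl (fun j _ => h4 j), sum_ite_fin (k:ℕ) c, dif_pos k.isLt]
      have hcast : ((((⟨(k:ℕ)-1, hkm⟩ : Fin n)):ℕ) : ℤ) + 1 = (k:ℤ) := by
        simp
        omega
      have expand : ((∑ j : Fin n, if (j:ℕ) ≤ (k:ℕ) then c j else 0) - ((k:ℕ)+1)*m)
          - ((∑ j : Fin n, if (j:ℕ) ≤ ((⟨(k:ℕ)-1, hkm⟩ : Fin n):ℕ) then c j else 0)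
              - ((((⟨(k:ℕ)-1, hkm⟩ : Fin n):ℕ):ℤ)+1)*m) + m = c k := by
        rw [hcast]
        have : ((k:ℕ):ℤ) + 1 = (k:ℤ) + 1 := by push_cast; ring
        rw [this]
        linear_combination hdiff
      exact expand
end

section
/- Let W be the finite Weyl group of type Aₙ and let w = s₁s₂⋯sₙ be the Coxeter element. Then the ℤ-module (Id − w)R^∨ has ℤ-basis {α₁^∨ − α₂^∨, α₂^∨ − α₃^∨, …, α_{n−1}^∨ − αₙ^∨, (n+1)αₙ^∨}. -/
/-!
The Coxeter element sends `αⱼ^∨ ↦ α_{j+1}^∨` for `j < n` and `αₙ^∨ ↦ −(α₁^∨ + ⋯ + αₙ^∨)`, so the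
columns of `Id − w` are `αⱼ^∨ − α_{j+1}^∨` (`j < n`) and `α₁^∨ + ⋯ + α_{n−1}^∨ + 2αₙ^∨`. Hence
`Id − w = V U`, where the columns of `V` are the claimed vectors and `U` is the identity except for
its last column `(1, 2, …, n − 1, 1)`. As `U` is unimodular, `(Id − w)R^∨ = V R^∨`, and `V` is
lower triangular with nonzero diagonal, so its columns are linearly independent.
-/

open Matrix

section MatrixRange

variable {R ι : Type*} [CommRing R] [Fintype ι] [DecidableEq ι]

theorem Matrix.range_toLin'_mul_of_isUnit_det {m : Type*} (A : Matrix m ι R)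
    {B : Matrix ι ι R} (hB : IsUnit B.det) :
    LinearMap.range (Matrix.toLin' (A * B)) = LinearMap.range (Matrix.toLin' A) := by
  rw [Matrix.toLin'_mul, LinearMap.range_comp_of_range_eq_top]
  refine LinearMap.range_eq_top.mpr fun y => ⟨B⁻¹ *ᵥ y, ?_⟩
  rw [Matrix.toLin'_apply, Matrix.mulVec_mulVec, Matrix.mul_nonsing_inv B hB, Matrix.one_mulVec]

theorem Matrix.exists_basis_range_toLin' [IsDomain R] {M : Matrix ι ι R} (hM : M.det ≠ 0) :
    ∃ b : Module.Basis ι R (LinearMap.range (Matrix.toLin' M)), ∀ i, (b i : ι → R) = M.col i := by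
  have hinj : Function.Injective (Matrix.toLin' M) := by
    rw [← LinearMap.ker_eq_bot, Matrix.ker_toLin'_eq_bot_iff]
    intro v hv
    by_contra hv0
    exact hM (Matrix.exists_mulVec_eq_zero_iff.mp ⟨v, hv0, hv⟩)
  refine ⟨(Pi.basisFun R ι).map (LinearEquiv.ofInjective _ hinj), fun i => ?_⟩
  simp only [Module.Basis.map_apply, LinearEquiv.ofInjective_apply, Pi.basisFun_apply,
    Matrix.toLin'_apply, Matrix.mulVec_single_one]

end MatrixRange

theorem mul_reflMat_apply {n : ℕ} (M C : Matrix (Fin n) (Fin n) ℤ) (k i j : Fin n) :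
    (M * reflMat C k) i j = M i j - M i k * C k j := by
  simp [Matrix.mul_apply, reflMat, Matrix.one_apply, mul_sub, mul_ite, Finset.sum_sub_distrib]

/-- The partial product `s₁ ⋯ s_k`, with coroots indexed from `0`: it sends `αⱼ^∨ ↦ α_{j+1}^∨`
for `j + 1 < k`, `α_{k-1}^∨ ↦ −(α₀^∨ + ⋯ + α_{k-1}^∨)`, `α_k^∨ ↦ α₀^∨ + ⋯ + α_k^∨`, and fixes the
other simple coroots. -/
def coxPartial (n k : ℕ) : Matrix (Fin n) (Fin n) ℤ :=
  Matrix.of fun i j =>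
    if (j : ℕ) + 1 < k then (if (i : ℕ) = j + 1 then 1 else 0)
    else if (j : ℕ) + 1 = k then (if (i : ℕ) < k then -1 else 0)
    else if (j : ℕ) = k then (if (i : ℕ) ≤ k then 1 else 0)
    else (if i = j then 1 else 0)

theorem coxPartial_zero (n : ℕ) : coxPartial n 0 = 1 := by
  ext i j
  simp only [coxPartial, Matrix.of_apply, Matrix.one_apply, Fin.ext_iff]
  grind

theorem coxPartial_mul_reflMat (n k : ℕ) (hk : k < n) :
    coxPartial n k * reflMat (cartanA n) ⟨k, hk⟩ = coxPartial n (k + 1) := by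
  ext i j
  simp only [mul_reflMat_apply, coxPartial, cartanA, Matrix.of_apply, Fin.ext_iff]
  grind

theorem coxA_eq_coxPartial (n : ℕ) : coxA n = coxPartial n n := by
  suffices h : ∀ k (hk : k ≤ n),
      ((List.ofFn fun i : Fin n => reflMat (cartanA n) i).take k).prod = coxPartial n k by
    rw [coxA, ← h n le_rfl, List.take_of_length_le (by simp)]
  intro k hk
  induction k with
  | zero => simp [coxPartial_zero]
  | succ k ih =>
    rw [List.prod_take_succ _ _ (by simpa using hk), ih (by omega), List.getElem_ofFn,
      coxPartial_mul_reflMat]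

def coxBasisVec (n : ℕ) (i : Fin n) : Fin n → ℤ :=
  if h : (i : ℕ) + 1 < n then
    Pi.single i 1 - Pi.single (⟨(i : ℕ) + 1, h⟩ : Fin n) 1
  else ((n : ℤ) + 1) • Pi.single i 1

def coxBasisMat (n : ℕ) : Matrix (Fin n) (Fin n) ℤ :=
  (Matrix.of (coxBasisVec n))ᵀ

theorem coxBasisMat_apply (n : ℕ) (k j : Fin n) :
    coxBasisMat n k j = if k = j then (if (j : ℕ) + 1 < n then 1 else (n : ℤ) + 1)
      else if (k : ℕ) = j + 1 then -1 else 0 := by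
  by_cases h : (j : ℕ) + 1 < n <;>
    simp [coxBasisMat, coxBasisVec, h, Pi.single_apply, Fin.ext_iff] <;> grind

def coxUnipotent (n : ℕ) : Matrix (Fin n) (Fin n) ℤ :=
  Matrix.of fun i j => if i = j then 1 else if (j : ℕ) + 1 = n then (i : ℤ) + 1 else 0

theorem coxBasisMat_mul_apply (n : ℕ) (M : Matrix (Fin n) (Fin n) ℤ) (i j : Fin n) :
    (coxBasisMat n * M) i j = (if (i : ℕ) + 1 < n then 1 else (n : ℤ) + 1) * M i j -
      if h : 1 ≤ (i : ℕ) then M ⟨i - 1, by omega⟩ j else 0 := by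
  rw [Matrix.mul_apply]
  by_cases hi : 1 ≤ (i : ℕ)
  · rw [dif_pos hi, Fintype.sum_eq_add i ⟨i - 1, by omega⟩ (by simp [Fin.ext_iff]; omega)] <;>
      simp only [coxBasisMat_apply, Fin.ext_iff] <;> grind
  · rw [dif_neg hi, Fintype.sum_eq_single i] <;>
      simp only [coxBasisMat_apply, Fin.ext_iff] <;> grind

theorem one_sub_coxA_eq (n : ℕ) : 1 - coxA n = coxBasisMat n * coxUnipotent n := by
  ext i j
  rw [coxBasisMat_mul_apply, coxA_eq_coxPartial]
  simp only [coxUnipotent, coxPartial, Matrix.sub_apply, Matrix.one_apply, Matrix.of_apply,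
    Fin.ext_iff]
  grind

theorem det_coxUnipotent (n : ℕ) : (coxUnipotent n).det = 1 := by
  rw [Matrix.det_of_isUpperTriangular]
  · simp [coxUnipotent]
  · intro i j hji
    simp only [coxUnipotent, Matrix.of_apply]
    grind

theorem det_coxBasisMat_ne_zero (n : ℕ) : (coxBasisMat n).det ≠ 0 := by
  rw [Matrix.det_of_isLowerTriangular]
  · refine Finset.prod_ne_zero_iff.mpr fun i _ => ?_
    rw [coxBasisMat_apply]
    split_ifs <;> omega
  · intro i j hij
    rw [OrderDual.toDual_lt_toDual] at hij
    rw [coxBasisMat_apply]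
    grind

theorem basis_modSet_coxeter_typeA_general (n : ℕ) :
    ∃ b : Module.Basis (Fin n) ℤ
        (LinearMap.range (Matrix.toLin' ((1 : Matrix (Fin n) (Fin n) ℤ) - coxA n))),
      ∀ i : Fin n, (b i : Fin n → ℤ) =
        if h : (i : ℕ) + 1 < n then
          Pi.single i 1 - Pi.single (⟨(i : ℕ) + 1, h⟩ : Fin n) 1
        else ((n : ℤ) + 1) • Pi.single i 1 := by
  rw [one_sub_coxA_eq, Matrix.range_toLin'_mul_of_isUnit_det _ (by simp [det_coxUnipotent])]
  exact Matrix.exists_basis_range_toLin' (det_coxBasisMat_ne_zero n)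

/-- In type `Aₙ`, for the Coxeter element `w = s₁s₂⋯sₙ`, the `ℤ`-module
`(Id − w)R^∨` has `ℤ`-basis `{α₁^∨ − α₂^∨, …, α_{n−1}^∨ − αₙ^∨, (n+1)αₙ^∨}`. -/
theorem basis_modSet_coxeter_typeA (n : ℕ) (hn : 1 ≤ n) :
    ∃ b : Module.Basis (Fin n) ℤ
        (LinearMap.range (Matrix.toLin' ((1 : Matrix (Fin n) (Fin n) ℤ) - coxA n))),
      ∀ i : Fin n, (b i : Fin n → ℤ) =
        if h : (i : ℕ) + 1 < n then
          Pi.single i 1 - Pi.single (⟨(i : ℕ) + 1, h⟩ : Fin n) 1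
        else ((n : ℤ) + 1) • Pi.single i 1 :=
  basis_modSet_coxeter_typeA_general n
end

section
/- Let W be the finite Weyl group of type A₂ with simple reflections s₁, s₂ and simple coroots α₁^∨, α₂^∨. For the rotation w = s₁s₂ one has (Id − w)R^∨ = {c₁α₁^∨ + c₂α₂^∨ : c₁, c₂ ∈ ℤ, c₁ + c₂ ≡ 0 mod 3}, and this submodule has index 3 in R^∨ = Mov(w) ∩ R^∨. In particular, s₁s₂ does not fill its move-set. -/
lemma Mval : ((1 : Matrix (Fin 2) (Fin 2) ℤ)
    - (reflMat (cartanA 2) 0 * reflMat (cartanA 2) 1)) = !![1, 1; -1, 2] := by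
  simp [reflMat, cartanA]
  decide

lemma mulVec_M (x : Fin 2 → ℤ) :
    (!![1, 1; -1, 2] : Matrix (Fin 2) (Fin 2) ℤ).mulVec x
      = ![x 0 + x 1, -x 0 + 2 * x 1] := by
  funext i
  fin_cases i <;> simp [Matrix.mulVec, dotProduct, Fin.sum_univ_two] <;> ring

lemma key (c : Fin 2 → ℤ) :
    (∃ x, (!![1, 1; -1, 2] : Matrix (Fin 2) (Fin 2) ℤ).mulVec x = c)
      ↔ (3 : ℤ) ∣ c 0 + c 1 := by
  constructor
  · rintro ⟨x, rfl⟩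
    rw [mulVec_M]
    exact ⟨x 1, by simp; ring⟩
  · rintro ⟨k, hk⟩
    refine ⟨![c 0 - k, k], ?_⟩
    rw [mulVec_M]
    funext i
    fin_cases i <;> simp <;> omega

def φ : (Fin 2 → ℤ) →+ ZMod 3 where
  toFun c := (c 0 + c 1 : ℤ)
  map_zero' := by simp
  map_add' a b := by simp only [Pi.add_apply]; push_cast; ring

/-- In type `A₂`, for the rotation `w = s₁s₂`:
`(Id − w)R^∨ = {c₁α₁^∨ + c₂α₂^∨ : c₁ + c₂ ≡ 0 mod 3}`; its move-set is all of `ℝ²`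
(so `Mov(w) ∩ R^∨ = R^∨`); the mod-set has index `3` in `R^∨`; in particular `w` does
not fill its move-set. -/
theorem modSet_rotation_typeA2 :
    (∀ c : Fin 2 → ℤ,
      (∃ x, ((1 : Matrix (Fin 2) (Fin 2) ℤ)
          - (reflMat (cartanA 2) 0 * reflMat (cartanA 2) 1)).mulVec x = c)
        ↔ (3 : ℤ) ∣ c 0 + c 1) ∧
    LinearMap.range (Matrix.toLin' (((1 : Matrix (Fin 2) (Fin 2) ℤ)
        - (reflMat (cartanA 2) 0 * reflMat (cartanA 2) 1)).map (Int.cast : ℤ → ℝ))) = ⊤ ∧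
    (LinearMap.range (Matrix.toLin' ((1 : Matrix (Fin 2) (Fin 2) ℤ)
        - (reflMat (cartanA 2) 0 * reflMat (cartanA 2) 1)))).toAddSubgroup.index = 3 ∧
    LinearMap.range (Matrix.toLin' ((1 : Matrix (Fin 2) (Fin 2) ℤ)
        - (reflMat (cartanA 2) 0 * reflMat (cartanA 2) 1))) ≠ ⊤ := by
  rw [Mval]
  refine ⟨key, ?_, ?_, ?_⟩
  · -- real range is ⊤
    rw [LinearMap.range_eq_top]
    intro y
    refine ⟨![(2 * y 0 - y 1) / 3, (y 0 + y 1) / 3], ?_⟩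
    rw [Matrix.toLin'_apply]
    funext i
    fin_cases i <;>
      simp [Matrix.mulVec, dotProduct, Fin.sum_univ_two, Matrix.map] <;> ring
  · -- index 3
    have hker : (LinearMap.range (Matrix.toLin'
        (!![1, 1; -1, 2] : Matrix (Fin 2) (Fin 2) ℤ))).toAddSubgroup = φ.ker := by
      ext c
      have : c ∈ LinearMap.range (Matrix.toLin'
          (!![1, 1; -1, 2] : Matrix (Fin 2) (Fin 2) ℤ)) ↔ (3 : ℤ) ∣ c 0 + c 1 := by
        rw [← key c]
        constructor
        · rintro ⟨x, rfl⟩; exact ⟨x, (Matrix.toLin'_apply _ _).symm⟩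
        · rintro ⟨x, rfl⟩; exact ⟨x, Matrix.toLin'_apply _ _⟩
      simp only [Submodule.mem_toAddSubgroup, this, AddMonoidHom.mem_ker]
      have hφ : φ c = ((c 0 + c 1 : ℤ) : ZMod 3) := rfl
      rw [hφ, ZMod.intCast_zmod_eq_zero_iff_dvd]
      norm_num
    rw [hker, AddSubgroup.index_ker]
    have hsurj : Function.Surjective φ := by
      intro z
      obtain ⟨n, rfl⟩ := ZMod.intCast_surjective z
      exact ⟨![n, 0], by simp [φ]⟩
    rw [AddMonoidHom.range_eq_top_of_surjective φ hsurj,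
      Nat.card_congr AddSubgroup.topEquiv.toEquiv, Nat.card_eq_fintype_card,
      ZMod.card]
  · -- not ⊤
    intro h
    have : (![1, 0] : Fin 2 → ℤ) ∈ LinearMap.range (Matrix.toLin'
        (!![1, 1; -1, 2] : Matrix (Fin 2) (Fin 2) ℤ)) := h ▸ Submodule.mem_top
    obtain ⟨x, hx⟩ := this
    have : (3 : ℤ) ∣ (![1, 0] : Fin 2 → ℤ) 0 + (![1, 0] : Fin 2 → ℤ) 1 :=
      (key _).mp ⟨x, by rw [← Matrix.toLin'_apply]; exact hx⟩
    simp at this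
end

section
/- Let W be a finite Weyl group with simple reflections S and let w ∈ W. If the fixed subspace Fix(w) = Ker(w − Id) of w acting on ℝⁿ is {0}, then for the Coxeter group element w the parabolic closure of w is all of W; in particular, the conjugacy class of w meets no proper standard parabolic subgroup W_J (J ⊊ S), i.e., w is cuspidal. -/
open scoped RealInnerProductSpace

/-!
A proper standard parabolic subgroup `W_J` fixes every vector orthogonal to the simple roots
`Δ j`, `j ∈ J`, and such a nonzero vector exists because the `Δ i` are linearly independent and
`J` misses some index. If `u w u⁻¹ ∈ W_J` fixes `v ≠ 0`, then `w` fixes `u⁻¹ v ≠ 0`, so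
`Fix(w) ≠ 0`.
-/

theorem exists_ne_zero_mem_orthogonal_span_image {E ι : Type*} [NormedAddCommGroup E]
    [InnerProductSpace ℝ E] [FiniteDimensional ℝ E] {Δ : ι → E}
    (hΔ : LinearIndependent ℝ Δ) {J : Set ι} (hJ : J ≠ Set.univ) :
    ∃ v ∈ (Submodule.span ℝ (Δ '' J))ᗮ, v ≠ 0 := by
  obtain ⟨i, hi⟩ := (Set.ne_univ_iff_exists_notMem J).mp hJ
  refine Submodule.exists_mem_ne_zero_of_ne_bot fun h => hΔ.notMem_span_image hi ?_
  rw [Submodule.orthogonal_eq_bot_iff.mp h]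
  exact Submodule.mem_top

theorem IsReflAlong.apply_eq_self {n : ℕ} {β v : V n} {g : V n ≃ₗ[ℝ] V n}
    (hg : IsReflAlong β g) (hv : ⟪v, β⟫ = 0) : g v = v := by
  simp [hg v, hv]

theorem closure_reflections_le_stabilizer {n : ℕ} {Δ : Fin n → V n}
    {s : Fin n → (V n ≃ₗ[ℝ] V n)} (hs : ∀ i, IsReflAlong (Δ i) (s i)) (J : Set (Fin n))
    {v : V n} (hv : v ∈ (Submodule.span ℝ (Δ '' J))ᗮ) :
    Subgroup.closure (s '' J) ≤ MulAction.stabilizer (V n ≃ₗ[ℝ] V n) v := by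
  rw [Subgroup.closure_le]
  rintro _ ⟨j, hj, rfl⟩
  refine (hs j).apply_eq_self ?_
  rw [real_inner_comm]
  exact Submodule.inner_right_of_mem_orthogonal
    (Submodule.subset_span (Set.mem_image_of_mem Δ hj)) hv

theorem LinearEquiv.eq_zero_of_apply_eq_self {R M : Type*} [Ring R] [AddCommGroup M]
    [Module R M] {w : M ≃ₗ[R] M} (hfix : LinearMap.ker (w.toLinearMap - LinearMap.id) = ⊥)
    {v : M} (hv : w v = v) : v = 0 := by
  have : v ∈ LinearMap.ker (w.toLinearMap - LinearMap.id) := by simp [hv]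
  simpa [hfix] using this

theorem MulAction.inv_smul_mem_stabilizer_of_conj {G α : Type*} [Group G] [MulAction G α]
    {u w : G} {v : α} (h : u * w * u⁻¹ ∈ MulAction.stabilizer G v) :
    w ∈ MulAction.stabilizer G (u⁻¹ • v) := by
  rw [MulAction.mem_stabilizer_iff] at h ⊢
  simpa [mul_smul, smul_eq_iff_eq_inv_smul] using h

theorem cuspidal_of_fix_trivial_general {n : ℕ} (Φ : Set (V n))
    (Δ : Fin n → V n) (hΔind : LinearIndependent ℝ Δ)
    (s : Fin n → (V n ≃ₗ[ℝ] V n)) (hs : ∀ i, IsReflAlong (Δ i) (s i))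
    (w : V n ≃ₗ[ℝ] V n)
    (hfix : LinearMap.ker (w.toLinearMap - LinearMap.id) = ⊥) :
    ∀ J : Set (Fin n), J ≠ Set.univ →
      ∀ u ∈ weylGroup Φ, u * w * u⁻¹ ∉ Subgroup.closure (s '' J) := by
  intro J hJ u _ hmem
  obtain ⟨v, hvJ, hv0⟩ := exists_ne_zero_mem_orthogonal_span_image hΔind hJ
  have hconj : u * w * u⁻¹ ∈ MulAction.stabilizer _ v :=
    closure_reflections_le_stabilizer hs J hvJ hmem
  have hwv : w (u⁻¹ v) = u⁻¹ v :=
    MulAction.mem_stabilizer_iff.mp (MulAction.inv_smul_mem_stabilizer_of_conj hconj)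
  exact hv0 (by simpa using LinearEquiv.eq_zero_of_apply_eq_self hfix hwv)

/-- If `w` lies in the Weyl group `W` (generated by the simple reflections
`s i` along a linearly independent system of simple roots `Δ i ∈ Φ`) and the fixed
subspace `Fix(w) = Ker(w − Id)` is trivial, then the parabolic closure of `w` is all of
`W`: no conjugate of `w` lies in a proper standard parabolic subgroup `W_J` (`J ⊊ S`),
i.e. `w` is cuspidal. -/
theorem cuspidal_of_fix_trivial {n : ℕ} (Φ : Set (V n)) (hΦ : IsCrystalRootSystem Φ)
    (Δ : Fin n → V n) (hΔΦ : ∀ i, Δ i ∈ Φ) (hΔind : LinearIndependent ℝ Δ)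
    (s : Fin n → (V n ≃ₗ[ℝ] V n)) (hs : ∀ i, IsReflAlong (Δ i) (s i))
    (hgen : weylGroup Φ = Subgroup.closure (Set.range s))
    (w : V n ≃ₗ[ℝ] V n) (hw : w ∈ weylGroup Φ)
    (hfix : LinearMap.ker (w.toLinearMap - LinearMap.id) = ⊥) :
    ∀ J : Set (Fin n), J ≠ Set.univ →
      ∀ u ∈ weylGroup Φ, u * w * u⁻¹ ∉ Subgroup.closure (s '' J) :=
  cuspidal_of_fix_trivial_general Φ Δ hΔind s hs w hfix
end
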